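/- The generating function of rooted outerplanar maps counted by vertices is M_O(z) = z(3 - sqrt(1-8z))/(2(1+z)), i.e., this function satisfies M_O(z) = z/(1 - A_O(M_O(z))) where A_O(z) = (1/4)(1 + z - sqrt(1 - 6z + z^2)). -/
import Mathlib


open Real

/-- Generating function of polygon dissections plus a single edge. -/
noncomputable def AO : ℝ → ℝ := fun w => (1 / 4) * (1 + w - Real.sqrt (1 - 6 * w + w ^ 2))

/-- Generating function of rooted outerplanar maps counted by vertices. -/
noncomputable def MO : ℝ → ℝ := fun z => z * (3 - Real.sqrt (1 - 8 * z)) / (2 * (1 + z))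

/-- `M_O(z) = z/(1 - A_O(M_O(z)))` for `0 ≤ z < 1/8`. -/
theorem outerplanar_gf_eq :
    ∀ z ∈ Set.Ico (0 : ℝ) (1 / 8), MO z = z / (1 - AO (MO z)) := by
  rintro z ⟨hz0, hz1⟩
  have h8 : (0:ℝ) ≤ 1 - 8 * z := by linarith
  set s : ℝ := Real.sqrt (1 - 8 * z) with hs
  have hs0 : 0 ≤ s := Real.sqrt_nonneg _
  have hs2 : s ^ 2 = 1 - 8 * z := Real.sq_sqrt h8
  have hs1 : s ≤ 1 := by nlinarith
  have hzp : (0:ℝ) < 1 + z := by linarith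
  set M : ℝ := MO z with hM
  have hMdef : M = z * (3 - s) / (2 * (1 + z)) := rfl
  have hkey : M * (3 + s) = 4 * z := by
    rw [hMdef]; field_simp; nlinarith
  have hM0 : 0 ≤ M := by
    rw [hMdef]
    apply div_nonneg _ (by linarith)
    apply mul_nonneg hz0; linarith
  have hsq : Real.sqrt (1 - 6 * M + M ^ 2) = s + M := by
    have : 1 - 6 * M + M ^ 2 = (s + M) ^ 2 := by nlinarith
    rw [this, Real.sqrt_sq (by linarith)]
  have hA : AO M = (1/4) * (1 - s) := by
    simp only [AO, hsq]; ring
  rw [hA]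
  have hden : 1 - (1/4) * (1 - s) = (3 + s) / 4 := by ring
  rw [hden]
  rw [div_div_eq_mul_div, eq_div_iff (by linarith)]
  linarith [hkey]
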